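/- For every integer N ≥ 1, every integer n ≥ 0, and every real x ≠ 0, Σ_{l=0}^{n} C(N+n-l, n-l) · V_l^{(N+1)}(x) = (1/(2^N · N!)) · Σ_{i=1}^{N} Σ_{l=0}^{i} a(i,N) · (i!/l!) · Σ_{(m,s,p): m+s+p=n} C(2N+m-i-1, m) · C(i-l+s, s) · (p+l)_l · x^{i-2N-m} · V_{p+l}(x), where the inner sum is over all triples (m,s,p) of nonnegative integers with m+s+p = n and x^{i-2N-m} is an integer (possibly negative) power of x. -/

import Mathlib

/-!
Write `g = D⁻¹`, `f = (1 - t) g` and `v = (x - t)⁻¹`, so that `V_n^{(α)}` is the `n`-th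
coefficient of `f ^ α`. From `D' = -2 (x - t)` we get `g' = 2 (x - t) g²`, hence the operator
`v · d/dt` sends `g ^ (N + 1)` to `2 (N + 1) g ^ (N + 2)` and `v ^ j h` to
`j v ^ (j + 2) h + v ^ (j + 1) h'`. By induction on `N`, the recursion of `a(i, N)` being exactly the
bookkeeping of this second rule, `2^N N! g ^ (N + 1) = ∑ᵢ a(i, N) v ^ (2N - i) g⁽ⁱ⁾`.
Now take `n`-th coefficients. On the left `g ^ (N + 1) = f ^ (N + 1) (1 - t) ^ (-(N + 1))`.
On the right, Leibniz' rule applied to `g = f · (1 - t)⁻¹` gives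
`g⁽ⁱ⁾ = ∑ₗ (i! / l!) (1 - t) ^ (-(i - l + 1)) f⁽ˡ⁾`, and the coefficients of the negative powers
of `x - t` and `1 - t` are binomial.
-/

/-- The falling factorial `(y)_k = y(y-1)⋯(y-k+1)` of a real number, `(y)_0 = 1`. -/
noncomputable def fallingFactorial (y : ℝ) (k : ℕ) : ℝ :=
  ∏ j ∈ Finset.range k, (y - (j : ℝ))

/-- `D = 1 - 2x·t + t²` as a formal power series in `t` over `ℝ`. -/
noncomputable def Dser (x : ℝ) : PowerSeries ℝ :=
  1 - PowerSeries.C (2 * x) * PowerSeries.X + PowerSeries.X ^ 2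

/-- The higher-order Chebyshev polynomial of the third kind `V_n^{(α)}(x)`,
the `n`-th coefficient of `((1-t)·D⁻¹)^α`. -/
noncomputable def chebV (x : ℝ) (α n : ℕ) : ℝ :=
  PowerSeries.coeff n (((1 - PowerSeries.X) * (Dser x)⁻¹) ^ α)

open PowerSeries Finset

theorem Derivation.iterate_leibniz {R A : Type*} [CommSemiring R] [CommSemiring A] [Algebra R A]
    (D : Derivation R A A) (n : ℕ) (a b : A) :
    D^[n] (a * b) = ∑ ij ∈ antidiagonal n, n.choose ij.1 • (D^[ij.1] a * D^[ij.2] b) := by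
  induction n with
  | zero => simp
  | succ n ih =>
    rw [Finset.sum_antidiagonal_choose_succ_nsmul (fun i j => D^[i] a * D^[j] b) n]
    simp only [Function.iterate_succ_apply', ih, map_sum, map_nsmul, Derivation.leibniz,
      smul_eq_mul, smul_add, sum_add_distrib]
    congr 1
    refine sum_congr rfl fun ⟨i, j⟩ hij ↦ ?_
    rw [n.choose_symm_of_eq_add (mem_antidiagonal.1 hij).symm, mul_comm]

namespace PowerSeries

variable {k : Type*} [Field k]

theorem inv_C_sub_X_eq_rescale {y : k} (hy : y ≠ 0) :
    (C y - X)⁻¹ = C y⁻¹ * rescale y⁻¹ (mk 1) := by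
  rw [inv_eq_iff_mul_eq_one (by simpa using hy)]
  have : C y - X = C y * rescale y⁻¹ (1 - X) := by
    rw [map_sub, map_one, rescale_X, mul_sub, ← mul_assoc, ← map_mul, mul_inv_cancel₀ hy]
    simp
  rw [this, mul_mul_mul_comm, ← map_mul, inv_mul_cancel₀ hy, map_one, one_mul, ← map_mul,
    mk_one_mul_one_sub_eq_one, map_one]

theorem coeff_inv_C_sub_X_pow {y : k} (hy : y ≠ 0) (j m : ℕ) :
    coeff m ((C y - X)⁻¹ ^ (j + 1)) = ((j + m).choose m : k) * y⁻¹ ^ (j + 1 + m) := by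
  rw [inv_C_sub_X_eq_rescale hy, mul_pow, ← map_pow, ← map_pow, mk_one_pow_eq_mk_choose_add,
    coeff_C_mul, coeff_rescale, coeff_mk, Nat.choose_symm_add]
  ring

theorem derivative_inv_C_sub_X_pow (y : k) (j : ℕ) :
    d⁄dX k ((C y - X)⁻¹ ^ j) = j * (C y - X)⁻¹ ^ (j + 1) := by
  rcases j with _ | j
  · simp
  · rw [derivative_pow, derivative_inv']
    simp only [map_sub, derivative_C, derivative_X]
    push_cast
    ring

theorem iterate_derivative_inv_C_sub_X (y : k) (j : ℕ) :
    (d⁄dX k)^[j] (C y - X)⁻¹ = (j.factorial : k⟦X⟧) * (C y - X)⁻¹ ^ (j + 1) := by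
  induction j with
  | zero => simp
  | succ j ih =>
    rw [Function.iterate_succ_apply', ih, Derivation.leibniz, derivative_inv_C_sub_X_pow]
    simp only [Nat.factorial_succ, Nat.cast_mul, Nat.cast_add, Nat.cast_one, smul_eq_mul,
      Derivation.map_natCast, mul_zero, add_zero]
    ring

theorem inv_C_sub_X_mul_derivative_inv_C_sub_X_pow_mul (y : k) (j : ℕ) (h : k⟦X⟧) :
    (C y - X)⁻¹ * d⁄dX k ((C y - X)⁻¹ ^ j * h) =
      (j : k) • ((C y - X)⁻¹ ^ (j + 2) * h) + (C y - X)⁻¹ ^ (j + 1) * d⁄dX k h := by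
  rw [Derivation.leibniz, derivative_inv_C_sub_X_pow, smul_eq_mul, smul_eq_mul, smul_eq_C_mul,
    map_natCast]
  ring

theorem coeff_mul_mul_eq_sum_range {R : Type*} [CommSemiring R] (f g h : R⟦X⟧) (n : ℕ) :
    coeff n (f * (g * h)) = ∑ m ∈ range (n + 1), ∑ s ∈ range (n + 1 - m),
      coeff m f * coeff s g * coeff (n - m - s) h := by
  rw [coeff_mul, Nat.sum_antidiagonal_eq_sum_range_succ (fun m j => coeff m f * coeff j (g * h))]
  refine sum_congr rfl fun m hm => ?_
  rw [coeff_mul, Nat.sum_antidiagonal_eq_sum_range_succ (fun s j => coeff s g * coeff j h),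
    mul_sum, show (n - m).succ = n + 1 - m by simp at hm; omega]
  simp only [mul_assoc, Nat.sub_sub]

end PowerSeries

theorem Finset.sum_Icc_one_eq_sum_range {M : Type*} [AddCommMonoid M] (f : ℕ → M) (N : ℕ) :
    ∑ i ∈ Icc 1 N, f i = ∑ k ∈ range N, f (k + 1) := by
  rw [← Ico_add_one_right_eq_Icc, sum_Ico_eq_sum_range]
  simp [add_comm]

theorem fallingFactorial_natCast_add (p l : ℕ) :
    fallingFactorial ((p : ℝ) + l) l = (p + 1).ascFactorial l := by
  rw [← Nat.add_descFactorial_eq_ascFactorial, Nat.descFactorial_eq_prod_range, fallingFactorial]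
  push_cast
  refine prod_congr rfl fun j hj => ?_
  rw [Nat.cast_sub (by simp at hj; omega)]
  push_cast
  ring

theorem sum_Icc_succ_smul_of_rec {M : Type*} [AddCommGroup M] [Module ℝ M] (a : ℕ → ℕ → ℝ)
    {N : ℕ} (hN : 1 ≤ N) (ha1 : a 1 (N + 1) = (2 * (N : ℝ) - 1) * a 1 N)
    (hadiag : a (N + 1) (N + 1) = a N N)
    (harec : ∀ i, 2 ≤ i → i ≤ N → a i (N + 1) = a (i - 1) N + (2 * (N : ℝ) - i) * a i N)
    (F : ℕ → M) :
    ∑ i ∈ Icc 1 (N + 1), a i (N + 1) • F i =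
      ∑ i ∈ Icc 1 N, ((2 * (N : ℝ) - i) * a i N) • F i + ∑ i ∈ Icc 1 N, a i N • F (i + 1) := by
  obtain ⟨M, rfl⟩ : ∃ M, N = M + 1 := ⟨N - 1, by omega⟩
  simp only [sum_Icc_one_eq_sum_range]
  rw [sum_range_succ', sum_range_succ, sum_range_succ', sum_range_succ _ M]
  have hmid : ∀ k ∈ range M, a (k + 1 + 1) (M + 1 + 1) • F (k + 1 + 1) =
      a (k + 1) (M + 1) • F (k + 1 + 1) +
        ((2 * ((M + 1 : ℕ) : ℝ) - (k + 1 + 1 : ℕ)) * a (k + 1 + 1) (M + 1)) • F (k + 1 + 1) := by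
    intro k hk
    rw [harec (k + 2) (by omega) (by simp at hk; omega), add_smul]
    rfl
  rw [sum_congr rfl hmid, sum_add_distrib, ha1, hadiag]
  simp only [zero_add, Nat.cast_one]
  abel

namespace ChebyshevV

variable (x : ℝ)

theorem derivative_inv_Dser : d⁄dX ℝ (Dser x)⁻¹ = 2 * (C x - X) * (Dser x)⁻¹ ^ 2 := by
  rw [derivative_inv', Dser]
  simp only [map_add, map_sub, Derivation.map_one_eq_zero, Derivation.leibniz, derivative_C,
    derivative_X, derivative_pow, smul_eq_mul]
  rw [map_mul, map_ofNat]
  ring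

theorem inv_C_sub_X_mul_derivative_inv_Dser_pow (hx : x ≠ 0) (N : ℕ) :
    (C x - X)⁻¹ * d⁄dX ℝ ((Dser x)⁻¹ ^ (N + 1)) =
      (2 * (N + 1) : ℝ⟦X⟧) * (Dser x)⁻¹ ^ (N + 2) := by
  have h := PowerSeries.inv_mul_cancel (C x - X) (by simpa using hx)
  rw [derivative_pow, derivative_inv_Dser]
  push_cast
  linear_combination (2 * (N + 1) : ℝ⟦X⟧) * (Dser x)⁻¹ ^ (N + 2) * h

theorem inv_Dser_eq_mul : (Dser x)⁻¹ = ((1 - X) * (Dser x)⁻¹) * (C 1 - X)⁻¹ := by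
  rw [map_one, mul_comm (1 - X), mul_assoc, PowerSeries.mul_inv_cancel _ (by simp), mul_one]

theorem coeff_inv_Dser_pow (N n : ℕ) :
    coeff n ((Dser x)⁻¹ ^ (N + 1)) =
      ∑ l ∈ range (n + 1), ((N + n - l).choose (n - l) : ℝ) * chebV x (N + 1) l := by
  rw [inv_Dser_eq_mul, mul_pow, coeff_mul, Nat.sum_antidiagonal_eq_sum_range_succ
    (fun l j => coeff l (((1 - X) * (Dser x)⁻¹) ^ (N + 1)) * coeff j ((C 1 - X)⁻¹ ^ (N + 1)))]
  refine sum_congr rfl fun l hl => ?_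
  rw [coeff_inv_C_sub_X_pow one_ne_zero, chebV, show N + (n - l) = N + n - l by simp at hl; omega]
  simp [mul_comm]

theorem smul_inv_Dser_pow_eq_sum (a : ℕ → ℕ → ℝ) (hx : x ≠ 0) (ha11 : a 1 1 = 1)
    (ha1 : ∀ N : ℕ, 1 ≤ N → a 1 (N + 1) = (2 * (N : ℝ) - 1) * a 1 N)
    (hadiag : ∀ N : ℕ, 1 ≤ N → a (N + 1) (N + 1) = a N N)
    (harec : ∀ N i : ℕ, 2 ≤ i → i ≤ N →
      a i (N + 1) = a (i - 1) N + (2 * (N : ℝ) - (i : ℝ)) * a i N)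
    (N : ℕ) (hN : 1 ≤ N) :
    ((2 : ℝ) ^ N * N.factorial) • (Dser x)⁻¹ ^ (N + 1) =
      ∑ i ∈ Icc 1 N, a i N • ((C x - X)⁻¹ ^ (2 * N - i) * (d⁄dX ℝ)^[i] (Dser x)⁻¹) := by
  induction N, hN using Nat.le_induction with
  | base =>
    have h := inv_C_sub_X_mul_derivative_inv_Dser_pow x hx 0
    rw [Icc_self, sum_singleton, ha11, one_smul, Function.iterate_one,
      show 2 * 1 - 1 = 1 from rfl]
    simp only [Nat.cast_zero, zero_add, pow_one] at h ⊢
    rw [h]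
    norm_num [two_smul, two_mul]
  | succ N hN ih =>
    set F : ℕ → ℝ⟦X⟧ := fun i => (C x - X)⁻¹ ^ (2 * (N + 1) - i) * (d⁄dX ℝ)^[i] (Dser x)⁻¹
    have hstep : ∀ i ∈ Icc 1 N, (C x - X)⁻¹ * d⁄dX ℝ
        (a i N • ((C x - X)⁻¹ ^ (2 * N - i) * (d⁄dX ℝ)^[i] (Dser x)⁻¹)) =
        ((2 * (N : ℝ) - i) * a i N) • F i + a i N • F (i + 1) := by
      intro i hi
      have hi2N : i ≤ 2 * N := by simp at hi; omega
      rw [Derivation.map_smul, mul_smul_comm, inv_C_sub_X_mul_derivative_inv_C_sub_X_pow_mul x,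
        ← Function.iterate_succ_apply' (d⁄dX ℝ), Nat.cast_sub hi2N]
      simp only [F, show 2 * N - i + 2 = 2 * (N + 1) - i by omega,
        show 2 * N - i + 1 = 2 * (N + 1) - (i + 1) by omega]
      push_cast
      rw [smul_add, smul_smul, mul_comm]
    have h := congrArg (fun f => (C x - X)⁻¹ * d⁄dX ℝ f) ih
    simp only [map_sum, mul_sum, sum_congr rfl hstep, sum_add_distrib] at h
    rw [sum_Icc_succ_smul_of_rec a hN (ha1 N hN) (hadiag N hN) (harec N), ← h,
      Derivation.map_smul, mul_smul_comm, inv_C_sub_X_mul_derivative_inv_Dser_pow x hx,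
      smul_eq_C_mul, smul_eq_C_mul]
    simp only [Nat.factorial_succ, map_mul, map_pow, map_natCast, map_ofNat]
    push_cast
    ring

theorem iterate_derivative_inv_Dser (i : ℕ) :
    (d⁄dX ℝ)^[i] (Dser x)⁻¹ = ∑ l ∈ range (i + 1), ((i.factorial : ℝ) / l.factorial) •
      ((C 1 - X)⁻¹ ^ (i - l + 1) * (d⁄dX ℝ)^[l] ((1 - X) * (Dser x)⁻¹)) := by
  conv_lhs => rw [inv_Dser_eq_mul]
  rw [Derivation.iterate_leibniz, Nat.sum_antidiagonal_eq_sum_range_succ (fun l j =>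
    i.choose l • ((d⁄dX ℝ)^[l] ((1 - X) * (Dser x)⁻¹) * (d⁄dX ℝ)^[j] (C 1 - X)⁻¹))]
  refine sum_congr rfl fun l hl => ?_
  have hfac : (i.factorial : ℝ) / l.factorial = i.choose l * (i - l).factorial := by
    rw [div_eq_iff (by positivity), ← Nat.choose_mul_factorial_mul_factorial
      (show l ≤ i by simp at hl; omega)]
    push_cast
    ring
  rw [iterate_derivative_inv_C_sub_X, smul_eq_C_mul, nsmul_eq_mul, hfac, map_mul, map_natCast,
    map_natCast]
  ring

theorem coeff_iterate_derivative_one_sub_X_mul_inv_Dser (l p : ℕ) :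
    coeff p ((d⁄dX ℝ)^[l] ((1 - X) * (Dser x)⁻¹)) =
      fallingFactorial ((p : ℝ) + l) l * chebV x 1 (p + l) := by
  rw [coeff_iterate_derivative, fallingFactorial_natCast_add, chebV, pow_one]

theorem coeff_inv_C_sub_X_pow_mul_iterate_derivative_inv_Dser (hx : x ≠ 0) {N i : ℕ}
    (hi : i < 2 * N) (n : ℕ) :
    coeff n ((C x - X)⁻¹ ^ (2 * N - i) * (d⁄dX ℝ)^[i] (Dser x)⁻¹) =
      ∑ l ∈ range (i + 1), ((i.factorial : ℝ) / l.factorial) *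
        ∑ m ∈ range (n + 1), ∑ s ∈ range (n + 1 - m),
          ((2 * N + m - i - 1).choose m : ℝ) * ((i - l + s).choose s : ℝ) *
            fallingFactorial (((n - m - s : ℕ) : ℝ) + l) l *
            x ^ ((i : ℤ) - 2 * N - m) * chebV x 1 ((n - m - s) + l) := by
  obtain ⟨j, hj⟩ : ∃ j, 2 * N - i = j + 1 := ⟨2 * N - i - 1, by omega⟩
  rw [iterate_derivative_inv_Dser, mul_sum, map_sum]
  refine sum_congr rfl fun l _ => ?_
  rw [mul_smul_comm, LinearMap.map_smul, smul_eq_mul, coeff_mul_mul_eq_sum_range]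
  congr 1
  refine sum_congr rfl fun m _ => sum_congr rfl fun s _ => ?_
  rw [hj, coeff_inv_C_sub_X_pow hx, coeff_inv_C_sub_X_pow one_ne_zero,
    coeff_iterate_derivative_one_sub_X_mul_inv_Dser, inv_one, one_pow, mul_one,
    show j + m = 2 * N + m - i - 1 by omega, ← zpow_natCast, inv_zpow',
    show -((j + 1 + m : ℕ) : ℤ) = i - 2 * N - m by omega]
  ring

end ChebyshevV

/-- for `N ≥ 1`, `n ≥ 0` and real `x ≠ 0`,
`Σ_{l=0}^n C(N+n-l, n-l) V_l^{(N+1)}(x) = (1/(2^N N!)) Σ_{i=1}^N Σ_{l=0}^i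
  a(i,N) (i!/l!) Σ_{m+s+p=n} C(2N+m-i-1, m) C(i-l+s, s) (p+l)_l x^{i-2N-m}
  V_{p+l}(x)`, where the inner sum over triples `(m,s,p)` of nonnegative
integers with `m+s+p = n` is realized as a double sum over `m ≤ n`,
`s ≤ n - m` with `p = n - m - s`, and `a` is the family defined by the
recursion `a(1,1) = 1`, `a(1,N+1) = (2N-1)a(1,N)`, `a(N+1,N+1) = a(N,N)`,
`a(i,N+1) = a(i-1,N) + (2N-i)a(i,N)` for `2 ≤ i ≤ N`. -/
theorem stmt8
    (a : ℕ → ℕ → ℝ)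
    (ha11 : a 1 1 = 1)
    (ha1 : ∀ N : ℕ, 1 ≤ N → a 1 (N + 1) = (2 * (N : ℝ) - 1) * a 1 N)
    (hadiag : ∀ N : ℕ, 1 ≤ N → a (N + 1) (N + 1) = a N N)
    (harec : ∀ N i : ℕ, 2 ≤ i → i ≤ N →
      a i (N + 1) = a (i - 1) N + (2 * (N : ℝ) - (i : ℝ)) * a i N)
    (x : ℝ) (hx : x ≠ 0) (N n : ℕ) (hN : 1 ≤ N) :
    ∑ l ∈ Finset.range (n + 1), (Nat.choose (N + n - l) (n - l) : ℝ) * chebV x (N + 1) l =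
      (1 / (2 ^ N * (Nat.factorial N : ℝ))) *
        ∑ i ∈ Finset.Icc 1 N, ∑ l ∈ Finset.range (i + 1),
          a i N * ((Nat.factorial i : ℝ) / (Nat.factorial l : ℝ)) *
            ∑ m ∈ Finset.range (n + 1), ∑ s ∈ Finset.range (n + 1 - m),
              (Nat.choose (2 * N + m - i - 1) m : ℝ) *
                (Nat.choose (i - l + s) s : ℝ) *
                fallingFactorial (((n - m - s : ℕ) : ℝ) + (l : ℝ)) l *
                x ^ ((i : ℤ) - 2 * (N : ℤ) - (m : ℤ)) *
                chebV x 1 ((n - m - s) + l) := by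
  have hcoeff := congrArg (coeff n)
    (ChebyshevV.smul_inv_Dser_pow_eq_sum x a hx ha11 ha1 hadiag harec N hN)
  rw [LinearMap.map_smul, smul_eq_mul, ChebyshevV.coeff_inv_Dser_pow, map_sum] at hcoeff
  rw [eq_comm, one_div, inv_mul_eq_iff_eq_mul₀ (by positivity), hcoeff]
  refine sum_congr rfl fun i hi => ?_
  rw [LinearMap.map_smul, smul_eq_mul,
    ChebyshevV.coeff_inv_C_sub_X_pow_mul_iterate_derivative_inv_Dser x hx (by simp at hi; omega),
    mul_sum]
  simp only [mul_assoc]
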